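/- arXiv:1511.04570 — 3 statements merged into one kernel-verified Lean document; each statement's English description precedes it below -/
import Mathlib

section
/- In the concrete case where x, y ∈ R^N both satisfy the Bézout equation with a ∈ R^N, the matrix H with entries H_{jk} = y_j x_k - y_k x_j is antisymmetric and satisfies y = x + aH. -/
open scoped BigOperators
open Matrix

/-- If `x` and `y` both solve the Bézout equation with `a`, then the matrix `H` with
entries `H j k = y j * x k - y k * x j` is antisymmetric and satisfies `y = x + aH`. -/
theorem bezout_explicit_antisymm_matrix {R : Type*} [CommRing R] {N : ℕ}
    (a x y : Fin N → R) (hx : ∑ j, x j * a j = 1) (hy : ∑ j, y j * a j = 1) :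
    (Matrix.of fun j k => y j * x k - y k * x j)ᵀ =
        -(Matrix.of fun j k => y j * x k - y k * x j) ∧
      ∀ k, y k = x k + ∑ j, (Matrix.of fun j k => y j * x k - y k * x j) k j * a j := by
  constructor
  · ext j k
    simp [Matrix.transpose_apply]
  · intro k
    have : ∑ j, (Matrix.of fun j k => y j * x k - y k * x j) k j * a j
        = y k * ∑ j, x j * a j - x k * ∑ j, y j * a j := by
      rw [Finset.mul_sum, Finset.mul_sum, ← Finset.sum_sub_distrib]
      apply Finset.sum_congr rfl
      intro j _
      simp [Matrix.of_apply]
      ring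
    rw [this, hx, hy]
    ring
end

section
/- One-variable Wedderburn theorem: If f₁,...,f_N are entire functions on ℂ with no common zero, then there exist entire functions g₁,...,g_N on ℂ with ∑_{j=1}^N g_j f_j = 1. -/
/-!
Choose `j₀` with `f j₀ ≢ 0`. The zeros of `f j₀` are countable, so for all but countably many
`t ∈ ℂ` the entire function `h = ∑ j, t ^ j * f j` has no zero in common with `f j₀`, and it
suffices to solve `α * f j₀ + β * h = 1`.

For two entire functions `f`, `h` without common zeros it suffices to find an entire `b` with
`1 - b * h` divisible by `f`. Near a zero `a` of `f` such a function is `q_a = p_a * f`, where `p_a`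
is the principal part of `1 / (f h)` at `a`. These local solutions are glued by a Mittag-Leffler
sum `b = ∑ a, (q_a - T_a * f)`, where the polynomial `T_a` approximates `p_a` on the disc of radius
`‖a‖ / 2` up to a summable error.
-/

open Filter Function Metric Set
open scoped Topology NNReal ENNReal

section DSlope

variable {𝕜 E : Type*} [NontriviallyNormedField 𝕜] [NormedAddCommGroup E] [NormedSpace 𝕜 E]

theorem eq_sum_add_pow_smul_iterate_dslope (φ : 𝕜 → E) (a z : 𝕜) (n : ℕ) :
    φ z = ∑ i ∈ Finset.range n, (z - a) ^ i • (swap dslope a)^[i] φ a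
      + (z - a) ^ n • (swap dslope a)^[n] φ z := by
  induction n with
  | zero => simp
  | succ n ih =>
    have step : (swap dslope a)^[n] φ z
        = (swap dslope a)^[n] φ a + (z - a) • (swap dslope a)^[n + 1] φ z := by
      rw [iterate_succ_apply', swap, sub_smul_dslope, add_sub_cancel]
    rw [ih, step, Finset.sum_range_succ, smul_add, smul_smul, ← pow_succ, add_assoc]

end DSlope

theorem Differentiable.iterate_dslope {E : Type*} [NormedAddCommGroup E] [NormedSpace ℂ E]
    [CompleteSpace E] {φ : ℂ → E} (hφ : Differentiable ℂ φ) (a : ℂ) (n : ℕ) :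
    Differentiable ℂ ((swap dslope a)^[n] φ) := by
  induction n with
  | zero => exact hφ
  | succ n ih =>
    rw [iterate_succ_apply', ← differentiableOn_univ] at *
    exact (Complex.differentiableOn_dslope univ_mem).mpr ih

namespace Differentiable

variable {f : ℂ → ℂ} (hf : Differentiable ℂ f) (hne : ∃ w, f w ≠ 0)
include hf hne

theorem eventually_codiscrete_ne_zero : ∀ᶠ z in codiscrete ℂ, f z ≠ 0 := by
  obtain ⟨w, hw⟩ := hne
  exact ((hf.differentiableOn.analyticOnNhd isOpen_univ
    ).eqOn_zero_or_eventually_ne_zero_of_preconnected isPreconnected_univ).resolve_left fun h => hw (h (mem_univ w))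

theorem eventually_ne_zero_nhdsNE (a : ℂ) : ∀ᶠ z in 𝓝[≠] a, f z ≠ 0 := by
  have h := disjoint_principal_right.mp (mem_codiscrete.mp (hf.eventually_codiscrete_ne_zero hne) a)
  rwa [compl_compl] at h

theorem finite_closedBall_inter_zeros (r : ℝ) : (closedBall (0 : ℂ) r ∩ f ⁻¹' {0}).Finite :=
  ((isCompact_closedBall 0 r).finite_sdiff_of_mem_codiscreteWithin
    (codiscreteWithin_mono (subset_univ _) (hf.eventually_codiscrete_ne_zero hne))).subset
    fun _ ⟨hz, hz0⟩ => ⟨hz, not_not.mpr hz0⟩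

theorem eventually_cofinite_lt_norm_zero (r : ℝ) :
    ∀ᶠ c : f ⁻¹' {0} in cofinite, r < ‖(c : ℂ)‖ := by
  refine ((hf.finite_closedBall_inter_zeros hne r).preimage Subtype.val_injective.injOn).subset ?_
  intro c hc
  exact ⟨mem_closedBall_zero_iff.mpr (not_lt.mp hc), c.2⟩

theorem countable_zeros : (f ⁻¹' {0}).Countable := by
  refine (countable_iUnion fun n : ℕ => (hf.finite_closedBall_inter_zeros hne n).countable).mono ?_
  intro z hz
  exact mem_iUnion.mpr ⟨⌈‖z‖⌉₊, mem_closedBall_zero_iff.mpr (Nat.le_ceil _), hz⟩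

theorem exists_eq_pow_mul (a : ℂ) :
    ∃ (n : ℕ) (v : ℂ → ℂ), Differentiable ℂ v ∧ v a ≠ 0 ∧ ∀ z, f z = (z - a) ^ n * v z := by
  obtain ⟨p, hp⟩ := hf.analyticAt a
  have hp0 : p ≠ 0 := fun h => by
    obtain ⟨z, hz0, hz⟩ := ((eventually_nhdsWithin_of_eventually_nhds
      (hp.locally_zero_iff.mpr h)).and (hf.eventually_ne_zero_nhdsNE hne a)).exists
    exact hz hz0
  exact ⟨p.order, _, hf.iterate_dslope a _, hp.iterate_dslope_fslope_ne_zero hp0,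
    hp.eq_pow_order_mul_iterate_dslope⟩

end Differentiable

theorem exists_local_bezout {f h : ℂ → ℂ} (hf : Differentiable ℂ f) (hne : ∃ w, f w ≠ 0)
    (hh : Differentiable ℂ h) {a : ℂ} (ha : h a ≠ 0) :
    ∃ p q ψ : ℂ → ℂ, DifferentiableOn ℂ p {a}ᶜ ∧ Differentiable ℂ q ∧ (∀ z ≠ a, q z = p z * f z) ∧
      AnalyticAt ℂ ψ a ∧ ∀ᶠ z in 𝓝 a, 1 - q z * h z = ψ z * f z := by
  obtain ⟨n, v, hv, hva, hfv⟩ := hf.exists_eq_pow_mul hne a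
  set φ : ℂ → ℂ := fun z => (v z * h z)⁻¹
  obtain ⟨P, hP⟩ := ((hv.mul hh).analyticAt a).inv (mul_ne_zero hva ha)
  -- `Q` is the Taylor polynomial of `1 / (v h)` of order `n`, and `Q / (z - a) ^ n` the principal
  -- part of `1 / (f h)` at `a`.
  set Q : ℂ → ℂ := fun z => ∑ i ∈ Finset.range n, (z - a) ^ i * (swap dslope a)^[i] φ a
  have hQ : Differentiable ℂ Q := by fun_prop
  refine ⟨fun z => Q z / (z - a) ^ n, fun z => Q z * v z, fun z => h z * (swap dslope a)^[n] φ z,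
    hQ.differentiableOn.div (by fun_prop) fun z hz => pow_ne_zero _ (sub_ne_zero.mpr hz),
    hQ.mul hv, fun z hz => ?_,
    (hh.analyticAt a).mul ⟨_, hP.has_fpower_series_iterate_dslope_fslope n⟩, ?_⟩
  · rw [hfv z]
    field_simp [pow_ne_zero n (sub_ne_zero.mpr hz)]
  · filter_upwards [(hv.mul hh).continuous.continuousAt.eventually_ne (mul_ne_zero hva ha)]
      with z hz
    have hφz : φ z = Q z + (z - a) ^ n * (swap dslope a)^[n] φ z := by
      simpa only [smul_eq_mul] using eq_sum_add_pow_smul_iterate_dslope φ a z n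
    have hφz' : v z * h z * φ z = 1 := mul_inv_cancel₀ hz
    rw [hfv z]
    linear_combination -hφz' + v z * h z * hφz

theorem exists_differentiable_eq_mul_of_eventuallyEq {f u : ℂ → ℂ} (hf : Differentiable ℂ f)
    (hne : ∃ w, f w ≠ 0) (hu : Differentiable ℂ u)
    (hloc : ∀ a, f a = 0 → ∃ φ : ℂ → ℂ, AnalyticAt ℂ φ a ∧ ∀ᶠ z in 𝓝 a, u z = φ z * f z) :
    ∃ g : ℂ → ℂ, Differentiable ℂ g ∧ ∀ z, u z = g z * f z := by
  classical
  choose! φ hφ hφu using hloc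
  refine ⟨fun z => if f z = 0 then φ z z else u z / f z, fun z₀ => ?_, fun z => ?_⟩
  · by_cases h0 : f z₀ = 0
    · refine (hφ z₀ h0).differentiableAt.congr_of_eventuallyEq ?_
      filter_upwards [hφu z₀ h0, eventually_nhdsWithin_iff.mp (hf.eventually_ne_zero_nhdsNE hne z₀)]
        with z hz hz0
      rcases eq_or_ne z z₀ with rfl | hzz₀
      · simp [h0]
      · rw [if_neg (hz0 hzz₀), hz, mul_div_cancel_right₀ _ (hz0 hzz₀)]
    · refine (hu.differentiableAt.div hf.differentiableAt h0).congr_of_eventuallyEq ?_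
      filter_upwards [hf.continuous.continuousAt.eventually_ne h0] with z hz
      simp [hz]
  · by_cases h0 : f z = 0
    · simpa [h0] using (hφu z h0).self_of_nhds
    · simp [h0]

section Approximation

variable {E : Type*} [NormedAddCommGroup E] [NormedSpace ℂ E] [CompleteSpace E]

theorem exists_differentiable_norm_sub_le_of_differentiableOn_closedBall {φ : ℂ → E} {r s ε : ℝ}
    (hφ : DifferentiableOn ℂ φ (closedBall 0 r)) (hs : 0 ≤ s) (hsr : s < r) (hε : 0 < ε) :
    ∃ T : ℂ → E, Differentiable ℂ T ∧ ∀ z ∈ closedBall 0 s, ‖φ z - T z‖ ≤ ε := by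
  lift r to ℝ≥0 using hs.trans hsr.le
  set r' : ℝ≥0 := ⟨(s + r) / 2, by positivity⟩
  have hsr' : s < r' := by change s < (s + r) / 2; linarith
  have hr'r : (r' : ℝ≥0∞) < r := by
    rw [ENNReal.coe_lt_coe, ← NNReal.coe_lt_coe]; change (s + r) / 2 < (r : ℝ); linarith
  have hφp := hφ.hasFPowerSeriesOnBall (hs.trans_lt hsr)
  obtain ⟨N, hN⟩ := (Metric.tendstoUniformlyOn_iff.mp (hφp.tendstoUniformlyOn hr'r) ε hε).exists
  refine ⟨fun z => (cauchyPowerSeries φ 0 r).partialSum N z, ?_, fun z hz => ?_⟩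
  · simp only [FormalMultilinearSeries.partialSum, FormalMultilinearSeries.apply_eq_pow_smul_coeff]
    fun_prop
  · have hz' : z ∈ ball (0 : ℂ) r' :=
      mem_ball_zero_iff.mpr ((mem_closedBall_zero_iff.mp hz).trans_lt hsr')
    simpa [dist_eq_norm] using (hN z hz').le

theorem exists_differentiable_norm_sub_le_on_closedBall_half {φ : ℂ → E} {a : ℂ}
    (hφ : DifferentiableOn ℂ φ {a}ᶜ) {ε : ℝ} (hε : 0 < ε) :
    ∃ T : ℂ → E, Differentiable ℂ T ∧ ∀ z ∈ closedBall 0 (‖a‖ / 2), ‖φ z - T z‖ ≤ ε := by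
  rcases eq_or_ne a 0 with rfl | ha
  · refine ⟨fun _ => φ 0, differentiable_const _, fun z hz => ?_⟩
    rw [norm_zero, zero_div, closedBall_zero, mem_singleton_iff] at hz
    simpa [hz] using hε.le
  · have ha' : 0 < ‖a‖ := norm_pos_iff.mpr ha
    refine exists_differentiable_norm_sub_le_of_differentiableOn_closedBall (r := 3 * ‖a‖ / 4)
      (hφ.mono fun z hz hza => ?_) (by positivity) (by linarith) hε
    rw [mem_closedBall_zero_iff, mem_singleton_iff.mp hza] at hz
    linarith

theorem differentiableOn_tsum_of_eventually_norm_le {ι : Type*} {F : ι → ℂ → E} {U : Set ℂ}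
    {u : ι → ℝ} (hu : Summable u) (hF : ∀ i, DifferentiableOn ℂ (F i) U) (hU : IsOpen U)
    (hFu : ∀ᶠ i in cofinite, ∀ z ∈ U, ‖F i z‖ ≤ u i) :
    DifferentiableOn ℂ (fun z => ∑' i, F i z) U :=
  (tendstoUniformlyOn_tsum_of_cofinite_eventually hu hFu).tendstoLocallyUniformlyOn.differentiableOn
    (.of_forall fun _ => DifferentiableOn.fun_sum fun i _ => hF i) hU

end Approximation

section MittagLeffler

variable {f : ℂ → ℂ} {p q T : ℂ → ℂ → ℂ} {u : ℂ → ℝ}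

theorem eventually_cofinite_ne_and_norm_sub_le (hf : Differentiable ℂ f) (hne : ∃ w, f w ≠ 0)
    (hpT : ∀ c, f c = 0 → ∀ z ∈ closedBall 0 (‖c‖ / 2), ‖p c z - T c z‖ ≤ u c) (r : ℝ) :
    ∀ᶠ c : f ⁻¹' {0} in cofinite, ∀ z ∈ closedBall (0 : ℂ) r, z ≠ c ∧ ‖p c z - T c z‖ ≤ u c := by
  filter_upwards [hf.eventually_cofinite_lt_norm_zero hne (2 * r)] with c hc z hz
  rw [mem_closedBall_zero_iff] at hz
  refine ⟨fun hzc => ?_, hpT c c.2 z (mem_closedBall_zero_iff.mpr (by linarith))⟩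
  rw [hzc] at hz
  linarith [norm_nonneg (c : ℂ)]

theorem differentiable_tsum_sub_mul (hf : Differentiable ℂ f) (hne : ∃ w, f w ≠ 0)
    (hq : ∀ c, f c = 0 → Differentiable ℂ (q c)) (hT : ∀ c, f c = 0 → Differentiable ℂ (T c))
    (hpq : ∀ c, f c = 0 → ∀ z ≠ c, q c z = p c z * f z) (hu : Summable fun c : f ⁻¹' {0} => u c)
    (hpT : ∀ c, f c = 0 → ∀ z ∈ closedBall 0 (‖c‖ / 2), ‖p c z - T c z‖ ≤ u c) :
    Differentiable ℂ fun z => ∑' c : f ⁻¹' {0}, (q c z - T c z * f z) := by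
  intro z₀
  obtain ⟨C, hC⟩ := (isCompact_closedBall (0 : ℂ) (‖z₀‖ + 1)).exists_bound_of_continuousOn
    hf.continuous.continuousOn
  refine (differentiableOn_tsum_of_eventually_norm_le
    (F := fun (c : f ⁻¹' {0}) z => q c z - T c z * f z) (U := ball 0 (‖z₀‖ + 1)) (hu.mul_right C)
    (fun c => ((hq c c.2).sub ((hT c c.2).mul hf)).differentiableOn) isOpen_ball
    ?_).differentiableAt (isOpen_ball.mem_nhds (by simp))
  filter_upwards [eventually_cofinite_ne_and_norm_sub_le hf hne hpT (‖z₀‖ + 1)] with c hc z hz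
  obtain ⟨hzc, hle⟩ := hc z (ball_subset_closedBall hz)
  rw [hpq c c.2 z hzc, ← sub_mul, norm_mul]
  exact mul_le_mul hle (hC z (ball_subset_closedBall hz)) (norm_nonneg _)
    ((norm_nonneg _).trans hle)

theorem exists_analyticAt_tsum_sub_mul_eventuallyEq (hf : Differentiable ℂ f)
    (hne : ∃ w, f w ≠ 0) (hp : ∀ c, f c = 0 → DifferentiableOn ℂ (p c) {c}ᶜ)
    (hq : ∀ c, f c = 0 → Differentiable ℂ (q c)) (hT : ∀ c, f c = 0 → Differentiable ℂ (T c))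
    (hpq : ∀ c, f c = 0 → ∀ z ≠ c, q c z = p c z * f z) (hu : Summable fun c : f ⁻¹' {0} => u c)
    (hpT : ∀ c, f c = 0 → ∀ z ∈ closedBall 0 (‖c‖ / 2), ‖p c z - T c z‖ ≤ u c)
    {a : ℂ} (ha : f a = 0) :
    ∃ Φ : ℂ → ℂ, AnalyticAt ℂ Φ a ∧
      ∀ᶠ z in 𝓝 a, ∑' c : f ⁻¹' {0}, (q c z - T c z * f z) = q a z + Φ z * f z := by
  classical
  set a' : f ⁻¹' {0} := ⟨a, ha⟩
  obtain ⟨ε, hε, hball⟩ := Metric.eventually_nhds_iff.mp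
    (eventually_nhdsWithin_iff.mp (hf.eventually_ne_zero_nhdsNE hne a))
  set Φ : ℂ → ℂ := fun z => ∑' c : f ⁻¹' {0}, (if c = a' then 0 else p c z - T c z) - T a z
  have hΦ : DifferentiableOn ℂ Φ (ball a ε) := by
    refine (differentiableOn_tsum_of_eventually_norm_le hu (fun c => ?_) isOpen_ball ?_).sub
      (hT a ha).differentiableOn
    · split_ifs with hca
      · exact differentiableOn_const 0
      · refine ((hp c c.2).mono fun z hz hzc => ?_).sub (hT c c.2).differentiableOn
        rw [mem_singleton_iff.mp hzc] at hz
        exact hball hz (fun h => hca (Subtype.ext h)) c.2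
    · filter_upwards [eventually_cofinite_ne_and_norm_sub_le hf hne hpT (‖a‖ + ε),
        eventually_cofinite_ne a'] with c hc hca z hz
      rw [if_neg hca]
      refine (hc z (mem_closedBall_zero_iff.mpr ?_)).2
      linarith [norm_le_norm_add_norm_sub' z a, mem_ball_iff_norm.mp hz]
  refine ⟨Φ, hΦ.analyticAt (ball_mem_nhds a hε), ?_⟩
  have hcont : ContinuousAt (fun z => q a z + Φ z * f z) a :=
    (hq a ha).continuous.continuousAt.add
      ((hΦ.continuousOn.continuousAt (ball_mem_nhds a hε)).mul hf.continuous.continuousAt)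
  refine (ContinuousAt.eventuallyEq_nhds_iff_eventuallyEq_nhdsNE
    (differentiable_tsum_sub_mul hf hne hq hT hpq hu hpT).continuous.continuousAt hcont).mp ?_
  filter_upwards [sdiff_mem_nhdsWithin_compl (ball_mem_nhds a hε) {a}] with z ⟨hz, hza⟩
  have hfz : f z ≠ 0 := hball hz hza
  have hzc : ∀ c : f ⁻¹' {0}, z ≠ c := fun c h => hfz (h ▸ c.2)
  have hsum : Summable fun c : f ⁻¹' {0} => p c z - T c z := by
    refine .of_norm_bounded_eventually hu ?_
    filter_upwards [eventually_cofinite_ne_and_norm_sub_le hf hne hpT ‖z‖] with c hc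
    exact (hc z (mem_closedBall_zero_iff.mpr le_rfl)).2
  calc ∑' c : f ⁻¹' {0}, (q c z - T c z * f z) = (∑' c : f ⁻¹' {0}, (p c z - T c z)) * f z := by
        rw [← tsum_mul_right]
        exact tsum_congr fun c => by rw [hpq c c.2 z (hzc c), sub_mul]
    _ = q a z + Φ z * f z := by
        rw [hsum.tsum_eq_add_tsum_ite a', hpq a ha z hza]
        ring

theorem exists_differentiable_eventuallyEq_add_mul (hf : Differentiable ℂ f)
    (hne : ∃ w, f w ≠ 0) (hp : ∀ a, f a = 0 → DifferentiableOn ℂ (p a) {a}ᶜ)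
    (hq : ∀ a, f a = 0 → Differentiable ℂ (q a))
    (hpq : ∀ a, f a = 0 → ∀ z ≠ a, q a z = p a z * f z) :
    ∃ b : ℂ → ℂ, Differentiable ℂ b ∧
      ∀ a, f a = 0 → ∃ Φ : ℂ → ℂ, AnalyticAt ℂ Φ a ∧ ∀ᶠ z in 𝓝 a, b z = q a z + Φ z * f z := by
  obtain ⟨u, hu_pos, _, hu, -⟩ := (hf.countable_zeros hne).exists_pos_hasSum_le one_pos
  choose! T hT hpT using fun c (hc : f c = 0) =>
    exists_differentiable_norm_sub_le_on_closedBall_half (hp c hc) (hu_pos c)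
  exact ⟨_, differentiable_tsum_sub_mul hf hne hq hT hpq hu.summable hpT,
    fun a ha => exists_analyticAt_tsum_sub_mul_eventuallyEq hf hne hp hq hT hpq hu.summable hpT ha⟩

end MittagLeffler

theorem exists_bezout_of_forall_ne_zero {f h : ℂ → ℂ} (hf : Differentiable ℂ f)
    (hh : Differentiable ℂ h) (hne : ∃ w, f w ≠ 0) (hfh : ∀ a, f a = 0 → h a ≠ 0) :
    ∃ α β : ℂ → ℂ, Differentiable ℂ α ∧ Differentiable ℂ β ∧ ∀ z, α z * f z + β z * h z = 1 := by
  choose! p q ψ hp hq hpq hψ hψq using fun a (ha : f a = 0) =>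
    exists_local_bezout hf hne hh (hfh a ha)
  obtain ⟨b, hb, hbq⟩ := exists_differentiable_eventuallyEq_add_mul hf hne hp hq hpq
  obtain ⟨g, hg, hgf⟩ := exists_differentiable_eq_mul_of_eventuallyEq (u := fun z => 1 - b z * h z)
    hf hne (by fun_prop) fun a ha => by
      obtain ⟨Φ, hΦ, hbΦ⟩ := hbq a ha
      refine ⟨fun z => ψ a z - Φ z * h z, (hψ a ha).sub (hΦ.mul (hh.analyticAt a)), ?_⟩
      filter_upwards [hbΦ, hψq a ha] with z hbz hψz
      rw [hbz]
      linear_combination hψz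
  exact ⟨g, b, hg, hb, fun z => by linear_combination -(hgf z)⟩

theorem Polynomial.exists_forall_eval_ne_zero {K ι : Type*} [Field K] [Uncountable K] [Countable ι]
    {P : ι → Polynomial K} (hP : ∀ i, P i ≠ 0) : ∃ t, ∀ i, (P i).eval t ≠ 0 := by
  by_contra! h
  refine not_countable_univ ((countable_iUnion fun i =>
    (finite_setOfPred_isRoot (hP i)).countable).mono fun t _ => ?_)
  obtain ⟨i, hi⟩ := h t
  exact mem_iUnion.mpr ⟨i, hi⟩

theorem exists_forall_sum_pow_mul_ne_zero {K ι : Type*} [Field K] [Uncountable K] [Countable ι]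
    {N : ℕ} {c : ι → Fin N → K} (hc : ∀ i, c i ≠ 0) :
    ∃ t : K, ∀ i, ∑ j : Fin N, t ^ (j : ℕ) * c i j ≠ 0 := by
  classical
  have hP : ∀ i, Polynomial.ofFn N (c i) ≠ 0 := fun i h => by
    obtain ⟨j, hj⟩ := Function.ne_iff.mp (hc i)
    exact hj (by simpa [h] using (Polynomial.ofFn_coeff_eq_val_of_lt (c i) j.2).symm)
  obtain ⟨t, ht⟩ := Polynomial.exists_forall_eval_ne_zero hP
  refine ⟨t, fun i => ?_⟩
  simpa [Polynomial.ofFn_eq_sum_monomial, Polynomial.eval_finsetSum, mul_comm] using ht i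

/-- Wedderburn's theorem: entire functions `f₁, …, f_N` on `ℂ` with no common zero
satisfy a Bézout equation `∑ j, g j * f j = 1` with entire `g j`. -/
theorem wedderburn_one_variable (N : ℕ) (f : Fin N → ℂ → ℂ)
    (hf : ∀ j, Differentiable ℂ (f j)) (hz : ∀ z : ℂ, ∃ j, f j z ≠ 0) :
    ∃ g : Fin N → ℂ → ℂ, (∀ j, Differentiable ℂ (g j)) ∧ ∀ z : ℂ, ∑ j, g j z * f j z = 1 := by
  classical
  have : Uncountable ℂ := Complex.ofReal_injective.uncountable
  obtain ⟨j₀, hj₀⟩ := hz 0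
  have : Countable (f j₀ ⁻¹' {0}) := ((hf j₀).countable_zeros ⟨0, hj₀⟩).to_subtype
  obtain ⟨t, ht⟩ := exists_forall_sum_pow_mul_ne_zero (c := fun (a : f j₀ ⁻¹' {0}) j => f j a)
    fun a h => (hz a).elim fun j hj => hj (congrFun h j)
  obtain ⟨α, β, hα, hβ, hαβ⟩ := exists_bezout_of_forall_ne_zero
    (h := fun z => ∑ j : Fin N, t ^ (j : ℕ) * f j z) (hf j₀)
    (.fun_sum fun j _ => (hf j).const_mul _) ⟨0, hj₀⟩ fun a ha => ht ⟨a, ha⟩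
  refine ⟨fun j z => (if j = j₀ then α z else 0) + t ^ (j : ℕ) * β z, fun j => ?_, fun z => ?_⟩
  · by_cases hj : j = j₀ <;> simp only [hj, if_true, if_false] <;> fun_prop
  · rw [← hαβ z, Finset.mul_sum]
    simp only [add_mul, Finset.sum_add_distrib, ite_mul, zero_mul, Finset.sum_ite_eq',
      Finset.mem_univ, if_true]
    exact congrArg _ (Finset.sum_congr rfl fun j _ => by ring)
end

section
/- Exhaustion gluing for Bézout solutions: Let f = (f₁,...,f_N) be a tuple of entire functions on ℂⁿ. Suppose for each k ∈ ℕ there is an N-tuple a_k of functions holomorphic on a neighborhood of the closed polydisk D_{k+1} with a_k·fᵗ = 1 on D_{k+1}, and suppose moreover a_{k+1} - a_k = f·H_k on D_{k+1} for antisymmetric matrices H_k of functions holomorphic near D_{k+1}. If P_k are antisymmetric matrices of polynomials with sup_{D_{k+1}} ‖f·H_k - f·P_k‖ < 2^{-k}, then g := ∑_{k=0}^∞ (a_{k+1} - a_k - f·P_k) (with a_0 = 0) defines an N-tuple of entire functions satisfying g·fᵗ = 1 on ℂⁿ. -/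
/-!
The partial sums of `g` telescope: `∑_{k<M} (a_{k+1} - a_k - f·P_k) = a_M - ∑_{k<M} f·P_k`.
Pairing with `f` kills every `f·P_k·fᵗ` by antisymmetry, so on `D_{M+1}` the partial sums
satisfy the Bézout identity exactly, and it survives in the limit. For `k ≥ m` the `k`-th term
equals `f·H_k - f·P_k` on the ball of radius `m`, hence is smaller than `2⁻ᵏ` there; by the
Cauchy estimate the derivatives of the tail are summable as well, so `g` is entire.
-/

open scoped BigOperators
open Matrix

/-- The closed polydisk of radius `k` in ℂⁿ. -/
def closedPolydiskR (n : ℕ) (k : ℝ) : Set (Fin n → ℂ) := {z | ∀ j, ‖z j‖ ≤ k}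

open Metric Set Filter Finset

theorem Finset.sum_range_sub_sub {G : Type*} [AddCommGroup G] (x y : ℕ → G) (M : ℕ) :
    ∑ k ∈ range M, (x (k + 1) - x k - y k) = x M - x 0 - ∑ k ∈ range M, y k := by
  rw [sum_sub_distrib, sum_range_sub]

theorem Matrix.vecMul_dotProduct_self_eq_zero {ι R : Type*} [Fintype ι] [CommRing R]
    [IsAddTorsionFree R] {A : Matrix ι ι R} (hA : Aᵀ = -A) (v : ι → R) :
    v ᵥ* A ⬝ᵥ v = 0 := by
  refine self_eq_neg.mp ?_
  calc v ᵥ* A ⬝ᵥ v = A *ᵥ v ⬝ᵥ v := by rw [← dotProduct_mulVec, dotProduct_comm]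
    _ = v ᵥ* Aᵀ ⬝ᵥ v := by rw [vecMul_transpose]
    _ = -(v ᵥ* A ⬝ᵥ v) := by rw [hA, vecMul_neg, neg_dotProduct]

theorem Matrix.sub_sum_vecMul_dotProduct_self {ι κ R : Type*} [Fintype ι] [CommRing R]
    [IsAddTorsionFree R] {A : κ → Matrix ι ι R} (hA : ∀ k, (A k)ᵀ = -A k) (s : Finset κ)
    (b v : ι → R) :
    (fun j => b j - ∑ k ∈ s, (v ᵥ* A k) j) ⬝ᵥ v = b ⬝ᵥ v := by
  simp only [dotProduct, sub_mul, sum_sub_distrib, sum_mul, sub_eq_self]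
  rw [sum_comm]
  exact sum_eq_zero fun k _ => vecMul_dotProduct_self_eq_zero (hA k) v

theorem sum_tsum_mul_eq_of_eventually_eq {ι R : Type*} [Fintype ι] [CommRing R]
    [TopologicalSpace R] [IsTopologicalRing R] [T2Space R] {u : ι → ℕ → R} {w : ι → R}
    {c : R} (hu : ∀ j, Summable (u j))
    (h : ∀ᶠ M in atTop, ∑ j, (∑ k ∈ range M, u j k) * w j = c) :
    ∑ j, (∑' k, u j k) * w j = c := by
  refine tendsto_nhds_unique ?_ (tendsto_const_nhds.congr' (EventuallyEq.symm h))
  exact tendsto_finsetSum _ fun j _ => (hu j).hasSum.tendsto_sum_nat.mul_const _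

theorem MvPolynomial.differentiable_eval {𝕜 σ : Type*} [NontriviallyNormedField 𝕜]
    [CompleteSpace 𝕜] [Fintype σ] (p : MvPolynomial σ 𝕜) :
    Differentiable 𝕜 fun x => eval x p := fun x =>
  (AnalyticOnNhd.eval_mvPolynomial p x (mem_univ x)).differentiableAt

theorem ball_zero_subset_closedPolydiskR (n : ℕ) {r s : ℝ} (hrs : r ≤ s) :
    ball (0 : Fin n → ℂ) r ⊆ closedPolydiskR n s := fun z hz j =>
  (norm_le_pi_norm z j).trans ((mem_ball_zero_iff.mp hz).le.trans hrs)

section Holomorphic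

variable {E F : Type*} [NormedAddCommGroup E] [NormedAddCommGroup F]

theorem summable_of_forall_mem_ball_norm_le [CompleteSpace F] {u : ℕ → E → F}
    {c : ℕ → ℝ} (hc : Summable c) (hle : ∀ k : ℕ, ∀ z ∈ ball (0 : E) k, ‖u k z‖ ≤ c k)
    (z : E) :
    Summable fun k => u k z := by
  refine .of_norm_bounded_eventually_nat hc ?_
  filter_upwards [eventually_gt_atTop ⌈‖z‖⌉₊] with k hk
  exact hle k z (mem_ball_zero_iff.mpr (Nat.lt_of_ceil_lt hk))

variable [NormedSpace ℂ E] [NormedSpace ℂ F]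

theorem norm_fderiv_le_of_forall_norm_le {f : E → F} {c : E} {r B : ℝ}
    (hf : DifferentiableOn ℂ f (ball c r)) (hr : 0 < r)
    (hB : ∀ z ∈ ball c r, ‖f z‖ ≤ B) :
    ‖fderiv ℂ f c‖ ≤ 2 * B / r := by
  refine Complex.norm_fderiv_le_div_of_mapsTo_ball hf (fun z hz => ?_) hr
  rw [mem_closedBall, dist_eq_norm, two_mul]
  exact (norm_sub_le _ _).trans (add_le_add (hB z hz) (hB c (mem_ball_self hr)))

variable [CompleteSpace F]

theorem differentiableOn_tsum_of_norm_le {u : ℕ → E → F} {c : ℕ → ℝ} {s : Set E}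
    (hc : Summable c) (hu : ∀ k, DifferentiableOn ℂ (u k) s) (hs : IsOpen s)
    (hle : ∀ k, ∀ z ∈ s, ‖u k z‖ ≤ c k) :
    DifferentiableOn ℂ (fun z => ∑' k, u k z) s := by
  intro x hx
  obtain ⟨ε, hε, hεs⟩ := Metric.isOpen_iff.mp hs x hx
  have hr : 0 < ε / 2 := half_pos hε
  have hsub : ∀ y ∈ ball x (ε / 2), ball y (ε / 2) ⊆ s := fun y hy =>
    (ball_subset_ball' (by linarith [mem_ball.mp hy])).trans hεs
  have hderiv : ∀ k, ∀ y ∈ ball x (ε / 2), ‖fderiv ℂ (u k) y‖ ≤ 2 * c k / (ε / 2) :=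
    fun k y hy => norm_fderiv_le_of_forall_norm_le ((hu k).mono (hsub y hy)) hr
      fun z hz => hle k z (hsub y hy hz)
  have hsum : Summable fun k => u k x := .of_norm_bounded hc fun k => hle k x hx
  refine (hasFDerivAt_tsum_of_isPreconnected ((hc.mul_left 2).div_const _) isOpen_ball
    (convex_ball x _).isPreconnected (fun k y hy => ?_) hderiv (mem_ball_self hr) hsum
    (mem_ball_self hr)).differentiableAt.differentiableWithinAt
  exact ((hu k).differentiableAt (hs.mem_nhds (hsub y hy (mem_ball_self hr)))).hasFDerivAt

theorem differentiable_tsum_of_exhaustion {u : ℕ → E → F} {c : ℕ → ℝ} (hc : Summable c)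
    (hpartial : ∀ m : ℕ, DifferentiableOn ℂ (fun z => ∑ k ∈ range m, u k z) (ball 0 m))
    (hu : ∀ k : ℕ, DifferentiableOn ℂ (u k) (ball 0 k))
    (hle : ∀ k : ℕ, ∀ z ∈ ball (0 : E) k, ‖u k z‖ ≤ c k) :
    Differentiable ℂ fun z => ∑' k, u k z := by
  intro z₀
  set m := ⌈‖z₀‖⌉₊ + 1
  have hz₀ : z₀ ∈ ball (0 : E) m := by
    rw [mem_ball_zero_iff]; push_cast [m]; linarith [Nat.le_ceil ‖z₀‖]
  have hmono : ∀ k, ball (0 : E) m ⊆ ball 0 (k + m : ℕ) :=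
    fun k => ball_subset_ball (by exact_mod_cast Nat.le_add_left m k)
  have htail : DifferentiableOn ℂ (fun z => ∑' k, u (k + m) z) (ball 0 m) :=
    differentiableOn_tsum_of_norm_le ((summable_nat_add_iff m).mpr hc)
      (fun k => (hu (k + m)).mono (hmono k)) isOpen_ball
      fun k z hz => hle (k + m) z (hmono k hz)
  have hsplit : EqOn (fun z => ∑' k, u k z)
      ((fun z => ∑ k ∈ range m, u k z) + fun z => ∑' k, u (k + m) z) (ball 0 m) :=
    fun z _ => ((summable_of_forall_mem_ball_norm_le hc hle z).sum_add_tsum_nat_add m).symm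
  exact (((hpartial m).add htail).congr hsplit).differentiableAt (isOpen_ball.mem_nhds hz₀)

end Holomorphic

theorem exhaustion_gluing_bezout_general (n N : ℕ)
    (f : Fin N → (Fin n → ℂ) → ℂ) (hf : ∀ j, Differentiable ℂ (f j))
    (a : ℕ → Fin N → (Fin n → ℂ) → ℂ) (ha0 : a 0 = 0)
    (haHol : ∀ k : ℕ, 1 ≤ k → ∀ j, ∃ U : Set (Fin n → ℂ),
      IsOpen U ∧ closedPolydiskR n ((k : ℝ) + 1) ⊆ U ∧ DifferentiableOn ℂ (a k j) U)
    (haBez : ∀ k : ℕ, 1 ≤ k → ∀ z ∈ closedPolydiskR n ((k : ℝ) + 1),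
      ∑ j, a k j z * f j z = 1)
    (H : ℕ → Matrix (Fin N) (Fin N) ((Fin n → ℂ) → ℂ))
    (hHrel : ∀ k : ℕ, 1 ≤ k → ∀ z ∈ closedPolydiskR n ((k : ℝ) + 1), ∀ j,
      a (k + 1) j z - a k j z = ∑ i, f i z * H k i j z)
    (P : ℕ → Matrix (Fin N) (Fin N) (MvPolynomial (Fin n) ℂ))
    (hPanti : ∀ k : ℕ, (P k)ᵀ = -P k)
    (hPapprox : ∀ k : ℕ, ∀ z ∈ closedPolydiskR n ((k : ℝ) + 1), ∀ j,
      ‖∑ i, f i z * H k i j z - ∑ i, f i z * MvPolynomial.eval z (P k i j)‖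
        < (2 : ℝ)⁻¹ ^ k) :
    ∃ g : Fin N → (Fin n → ℂ) → ℂ,
      (∀ j, Differentiable ℂ (g j)) ∧
      (∀ j, ∀ z : Fin n → ℂ, HasSum
        (fun k : ℕ => a (k + 1) j z - a k j z - ∑ i, f i z * MvPolynomial.eval z (P k i j))
        (g j z)) ∧
      ∀ z : Fin n → ℂ, ∑ j, g j z * f j z = 1 := by
  set Q : ℕ → Fin N → (Fin n → ℂ) → ℂ :=
    fun k j z => ∑ i, f i z * MvPolynomial.eval z (P k i j)
  set u : Fin N → ℕ → (Fin n → ℂ) → ℂ :=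
    fun j k z => a (k + 1) j z - a k j z - Q k j z
  have hQ : ∀ k j, Differentiable ℂ (Q k j) := fun k j =>
    .fun_sum fun i _ => (hf i).mul (MvPolynomial.differentiable_eval _)
  have ha : ∀ k j, DifferentiableOn ℂ (a k j) (ball 0 k) := by
    rintro (_ | k) j
    · simpa using differentiableOn_empty
    · obtain ⟨U, -, hDU, hU⟩ := haHol (k + 1) k.succ_pos j
      exact hU.mono ((ball_zero_subset_closedPolydiskR n (by linarith)).trans hDU)
  have hle : ∀ j (k : ℕ), ∀ z ∈ ball (0 : Fin n → ℂ) k,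
      ‖u j k z‖ ≤ (2 : ℝ)⁻¹ ^ k := by
    rintro j (_ | k) z hz
    · simp at hz
    · have hzD : z ∈ closedPolydiskR n ((k + 1 : ℕ) + 1) :=
        ball_zero_subset_closedPolydiskR n (by linarith) hz
      simpa only [u, Q, hHrel (k + 1) k.succ_pos z hzD j] using (hPapprox _ z hzD j).le
  have hpartial : ∀ M j z, ∑ k ∈ range M, u j k z = a M j z - ∑ k ∈ range M, Q k j z :=
    fun M j z => by simp [u, sum_range_sub_sub (a · j z), ha0]
  have hgeom : Summable fun k : ℕ => (2 : ℝ)⁻¹ ^ k :=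
    summable_geometric_of_lt_one (by norm_num) (by norm_num)
  have hsum : ∀ j z, Summable fun k => u j k z := fun j =>
    summable_of_forall_mem_ball_norm_le hgeom (hle j)
  refine ⟨fun j z => ∑' k, u j k z, fun j => ?_, fun j z => (hsum j z).hasSum,
    fun z => sum_tsum_mul_eq_of_eventually_eq (hsum · z) ?_⟩
  · refine differentiable_tsum_of_exhaustion hgeom (fun m => ?_) (fun k => ?_) (hle j)
    · exact ((ha m j).sub (Differentiable.fun_sum fun k _ => hQ k j).differentiableOn).congr
        fun z _ => hpartial m j z
    · exact (((ha (k + 1) j).mono (ball_subset_ball (by simp))).sub (ha k j)).sub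
        (hQ k j).differentiableOn
  · filter_upwards [eventually_gt_atTop ⌈‖z‖⌉₊] with M hM
    have hzD : z ∈ closedPolydiskR n (M + 1) :=
      ball_zero_subset_closedPolydiskR n (by linarith)
        (mem_ball_zero_iff.mpr (Nat.lt_of_ceil_lt hM))
    simp only [hpartial]
    exact (sub_sum_vecMul_dotProduct_self (A := fun k => (P k).map (MvPolynomial.eval z))
      (fun k => by rw [← transpose_map, hPanti, Matrix.map_neg _ (map_neg _)]) _ _ _).trans
      (haBez M (Nat.one_le_of_lt hM) z hzD)

/-- Exhaustion gluing for Bézout solutions: given local Bézout solutions `a k` for the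
entire tuple `f` on the closed polydisks `D (k+1)`, holomorphic on a neighborhood of
`D (k+1)`, with consecutive differences `a (k+1) - a k = f·H k` for antisymmetric
matrices `H k` holomorphic near `D (k+1)` (with `a 0 = 0`, `H 0 = 0`), and antisymmetric
polynomial matrices `P k` with `sup_{D (k+1)} ‖f·H k - f·P k‖ < 2⁻ᵏ`, the sum
`g = ∑ k, (a (k+1) - a k - f·P k)` is an entire Bézout solution: `g·fᵗ = 1` on ℂⁿ. -/
theorem exhaustion_gluing_bezout (n N : ℕ)
    (f : Fin N → (Fin n → ℂ) → ℂ) (hf : ∀ j, Differentiable ℂ (f j))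
    (a : ℕ → Fin N → (Fin n → ℂ) → ℂ) (ha0 : a 0 = 0)
    (haHol : ∀ k : ℕ, 1 ≤ k → ∀ j, ∃ U : Set (Fin n → ℂ),
      IsOpen U ∧ closedPolydiskR n ((k : ℝ) + 1) ⊆ U ∧ DifferentiableOn ℂ (a k j) U)
    (haBez : ∀ k : ℕ, 1 ≤ k → ∀ z ∈ closedPolydiskR n ((k : ℝ) + 1),
      ∑ j, a k j z * f j z = 1)
    (H : ℕ → Matrix (Fin N) (Fin N) ((Fin n → ℂ) → ℂ)) (hH0 : H 0 = 0)
    (hHHol : ∀ k : ℕ, ∀ i j, ∃ U : Set (Fin n → ℂ),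
      IsOpen U ∧ closedPolydiskR n ((k : ℝ) + 1) ⊆ U ∧ DifferentiableOn ℂ (H k i j) U)
    (hHanti : ∀ k : ℕ, (H k)ᵀ = -H k)
    (hHrel : ∀ k : ℕ, 1 ≤ k → ∀ z ∈ closedPolydiskR n ((k : ℝ) + 1), ∀ j,
      a (k + 1) j z - a k j z = ∑ i, f i z * H k i j z)
    (P : ℕ → Matrix (Fin N) (Fin N) (MvPolynomial (Fin n) ℂ))
    (hPanti : ∀ k : ℕ, (P k)ᵀ = -P k)
    (hPapprox : ∀ k : ℕ, ∀ z ∈ closedPolydiskR n ((k : ℝ) + 1), ∀ j,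
      ‖∑ i, f i z * H k i j z - ∑ i, f i z * MvPolynomial.eval z (P k i j)‖
        < (2 : ℝ)⁻¹ ^ k) :
    ∃ g : Fin N → (Fin n → ℂ) → ℂ,
      (∀ j, Differentiable ℂ (g j)) ∧
      (∀ j, ∀ z : Fin n → ℂ, HasSum
        (fun k : ℕ => a (k + 1) j z - a k j z - ∑ i, f i z * MvPolynomial.eval z (P k i j))
        (g j z)) ∧
      ∀ z : Fin n → ℂ, ∑ j, g j z * f j z = 1 :=
  exhaustion_gluing_bezout_general n N f hf a ha0 haHol haBez H hHrel P hPanti hPapprox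
end
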